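/- arXiv:1311.7633 — 3 statements merged into one kernel-verified Lean document; each statement's English description precedes it below -/
import Mathlib

section
/- Let c : (ℤ²)³ → ℝ be defined by c(g₀,g₁,g₂) = α(g₁ − g₀)·β(g₂ − g₁), where α(p,q) = p and β(p,q) = q. Then c does not lie at bounded distance from any alternating cochain: for every alternating function f : (ℤ²)³ → ℝ, sup over (g₀,g₁,g₂) ∈ (ℤ²)³ of |c(g₀,g₁,g₂) − f(g₀,g₁,g₂)| = +∞. -/
/-!
Rotating the three arguments cyclically is an even permutation, so an alternating `f` takes the
same value on `(na, 0, nb)` and on its rotation `(0, nb, na)`, with `a = (1, 0)`, `b = (0, 1)`.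
The cocycle `c` takes the values `-n²` and `0` there, so `|c - f|` is at least `n² / 2` at one of
the two triples.
-/

theorem comp_finRotate_of_alternating {G R : Type*} [Ring R] {n : ℕ} (f : (Fin n → G) → R)
    (hf : ∀ (σ : Equiv.Perm (Fin n)) (g : Fin n → G),
      f (fun i => g (σ i)) = ((Equiv.Perm.sign σ : ℤ) : R) * f g)
    (g : Fin n → G) : f (g ∘ finRotate n) = (-1) ^ (n - 1) * f g :=
  (hf (finRotate n) g).trans (by simp [sign_finRotate])

theorem exists_nat_sq_gt (C : ℝ) : ∃ n : ℕ, C < (n : ℝ) ^ 2 := by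
  obtain ⟨n, hn⟩ := exists_nat_gt C
  exact ⟨n, hn.trans_le (by exact_mod_cast Nat.le_self_pow two_ne_zero n)⟩

theorem abs_sub_le_add_of_eq {α : Type*} {c f : α → ℝ} {x y : α} (hxy : f x = f y) :
    |c x - c y| ≤ |c x - f x| + |c y - f y| := by
  simpa [hxy, abs_sub_comm (f y)] using abs_sub_le (c x) (f x) (c y)

/-- The cup-product cocycle `c(g₀,g₁,g₂) = α(g₁−g₀)·β(g₂−g₁)` on `ℤ²` is not at bounded
distance from any alternating cochain: for every alternating `f : (ℤ²)³ → ℝ`, the difference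
`|c − f|` is unbounded. -/
theorem cup_product_not_bounded_distance_from_alternating
    (c : (Fin 3 → ℤ × ℤ) → ℝ)
    (hc : ∀ g : Fin 3 → ℤ × ℤ, c g = ((g 1 - g 0).1 : ℝ) * ((g 2 - g 1).2 : ℝ))
    (f : (Fin 3 → ℤ × ℤ) → ℝ)
    (hf : ∀ (σ : Equiv.Perm (Fin 3)) (g : Fin 3 → ℤ × ℤ),
      f (fun i => g (σ i)) = ((Equiv.Perm.sign σ : ℤ) : ℝ) * f g) :
    ∀ C : ℝ, ∃ g : Fin 3 → ℤ × ℤ, C < |c g - f g| := by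
  intro C
  obtain ⟨n, hn⟩ := exists_nat_sq_gt (2 * C)
  set g : Fin 3 → ℤ × ℤ := ![(n, 0), 0, (0, n)]
  have hcg : c g = -(n : ℝ) ^ 2 := by simp [hc, g, sq]
  have hcg_rot : c (g ∘ finRotate 3) = 0 := by simp [hc, g]
  have hfg : f (g ∘ finRotate 3) = f g := by
    simpa using comp_finRotate_of_alternating f hf g
  have hgap : |c (g ∘ finRotate 3) - c g| = (n : ℝ) ^ 2 := by
    rw [hcg, hcg_rot, zero_sub, neg_neg, abs_of_nonneg (by positivity)]
  by_contra! hbounded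
  have hsep := abs_sub_le_add_of_eq (c := c) hfg
  linarith [hbounded g, hbounded (g ∘ finRotate 3)]
end

section
/- Let G be a group, V a normed real vector space, and n ≥ 0. Let δ^n : C^n(G,V) → C^{n+1}(G,V) be the homogeneous differential (δ^n φ)(g₀,…,g_{n+1}) = Σ_{j=0}^{n+1} (−1)^j φ(g₀,…,ĝ_j,…,g_{n+1}). Then δ^{n} ∘ alt^{n} = alt^{n+1} ∘ δ^{n}. Consequently, for every quasi-cocycle φ ∈ C^n(G,V) (i.e., ‖δ^n φ‖_∞ < ∞), the alternating cochain alt^n(φ) is also a quasi-cocycle, with defect ‖δ^n(alt^n φ)‖_∞ ≤ ‖δ^n φ‖_∞. -/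
open scoped ENNReal

/-- The alternation operator on homogeneous `n`-cochains. -/
noncomputable def altCochain {G V : Type*} [AddCommGroup V] [Module ℝ V] (n : ℕ)
    (φ : (Fin (n + 1) → G) → V) : (Fin (n + 1) → G) → V :=
  fun g => (((n + 1).factorial : ℝ))⁻¹ •
    ∑ σ : Equiv.Perm (Fin (n + 1)), ((Equiv.Perm.sign σ : ℤ) : ℝ) • φ (fun i => g (σ i))

/-- The homogeneous differential `(δⁿφ)(g₀,…,g_{n+1}) = Σ_j (−1)^j φ(g₀,…,ĝ_j,…,g_{n+1})`. -/
def hdelta {G V : Type*} [AddCommGroup V] [Module ℝ V] (n : ℕ)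
    (φ : (Fin (n + 1) → G) → V) : (Fin (n + 2) → G) → V :=
  fun g => ∑ j : Fin (n + 2), ((-1 : ℝ) ^ (j : ℕ)) • φ (fun k => g (j.succAbove k))

/-! Evaluated at `g`, both `δ(alt φ)` and `alt(δ φ)` equal
`((n + 1)!)⁻¹ • ∑ τ, sign τ • φ (g ∘ τ ∘ Fin.succ)`, the sum running over `Perm (Fin (n + 2))`.
On the left, `τ` is recorded by `j = τ 0` together with the order in which it lists the remaining
points, i.e. `τ ∘ Fin.succ = j.succAbove ∘ σ` with `sign τ = (-1) ^ j * sign σ`. On the right,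
reindexing by the cycle `Fin.cycleRange j` turns the `j`-th face into the `0`-th one at the cost
of the sign `(-1) ^ j`, and the `n + 2` equal faces cancel the extra factor `(n + 2)⁻¹`. The defect
bound holds because alternation is an average of signed permuted copies. -/

open Equiv Equiv.Perm

noncomputable def consSuccAbovePerm {n : ℕ} (j : Fin (n + 2)) (σ : Perm (Fin (n + 1))) :
    Perm (Fin (n + 2)) :=
  (Fin.cycleRange j)⁻¹ * decomposeFin.symm (0, σ)

section consSuccAbovePerm

variable {n : ℕ} (j : Fin (n + 2)) (σ : Perm (Fin (n + 1)))

@[simp]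
lemma consSuccAbovePerm_zero : consSuccAbovePerm j σ 0 = j := by
  simp [consSuccAbovePerm]

@[simp]
lemma consSuccAbovePerm_succ (k : Fin (n + 1)) :
    consSuccAbovePerm j σ k.succ = j.succAbove (σ k) := by
  simp [consSuccAbovePerm]

lemma sign_consSuccAbovePerm :
    sign (consSuccAbovePerm j σ) = (-1) ^ (j : ℕ) * sign σ := by
  simp [consSuccAbovePerm, Fin.sign_cycleRange]

lemma consSuccAbovePerm_bijective :
    Function.Bijective (fun p : Fin (n + 2) × Perm (Fin (n + 1)) ↦ consSuccAbovePerm p.1 p.2) := by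
  rw [Fintype.bijective_iff_injective_and_card]
  refine ⟨?_, by simp [Fintype.card_perm, Nat.factorial_succ]⟩
  rintro ⟨j, σ⟩ ⟨j', σ'⟩ h
  obtain rfl : j = j' := by simpa using congr($h 0)
  have : decomposeFin.symm (0, σ) = decomposeFin.symm (0, σ') := mul_left_cancel h
  simpa using decomposeFin.symm.injective this

end consSuccAbovePerm

section SignedSums

variable {R V : Type*} [Ring R] [AddCommGroup V] [Module R V] {n : ℕ}
  (f : (Fin (n + 1) → Fin (n + 2)) → V)

lemma sum_sign_smul_comp_succ :
    ∑ τ : Perm (Fin (n + 2)), ((sign τ : ℤ) : R) • f (fun k ↦ τ k.succ) =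
      ∑ j : Fin (n + 2), ((-1 : R) ^ (j : ℕ)) •
        ∑ σ : Perm (Fin (n + 1)), ((sign σ : ℤ) : R) • f (fun k ↦ j.succAbove (σ k)) := by
  simp only [Finset.smul_sum, smul_smul, ← Fintype.sum_prod_type']
  refine (Fintype.sum_bijective _ consSuccAbovePerm_bijective _ _ fun p ↦ ?_).symm
  simp [sign_consSuccAbovePerm]

lemma neg_one_pow_smul_sum_sign_smul_comp_succAbove (j : Fin (n + 2)) :
    ((-1 : R) ^ (j : ℕ)) •
        ∑ τ : Perm (Fin (n + 2)), ((sign τ : ℤ) : R) • f (fun k ↦ τ (j.succAbove k)) =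
      ∑ τ : Perm (Fin (n + 2)), ((sign τ : ℤ) : R) • f (fun k ↦ τ k.succ) := by
  rw [Finset.smul_sum]
  refine Fintype.sum_equiv (Equiv.mulRight (Fin.cycleRange j)⁻¹) _ _ fun τ ↦ ?_
  have happ (k : Fin (n + 1)) : (τ * (Fin.cycleRange j)⁻¹) k.succ = τ (j.succAbove k) := by
    simp
  simp [happ, smul_smul, Fin.sign_cycleRange, mul_comm]

end SignedSums

section Cochains

variable {G V : Type*} [AddCommGroup V] [Module ℝ V] {n : ℕ} (φ : (Fin (n + 1) → G) → V)
  (g : Fin (n + 2) → G)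

lemma hdelta_altCochain_apply :
    hdelta n (altCochain n φ) g = ((n + 1).factorial : ℝ)⁻¹ •
      ∑ τ : Perm (Fin (n + 2)), ((sign τ : ℤ) : ℝ) • φ (fun k ↦ g (τ k.succ)) := by
  rw [sum_sign_smul_comp_succ (fun u ↦ φ (fun k ↦ g (u k)))]
  simp only [hdelta, altCochain, smul_comm ((-1 : ℝ) ^ _) (((n + 1).factorial : ℝ)⁻¹),
    ← Finset.smul_sum]

lemma altCochain_hdelta_apply :
    altCochain (n + 1) (hdelta n φ) g = ((n + 1).factorial : ℝ)⁻¹ •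
      ∑ τ : Perm (Fin (n + 2)), ((sign τ : ℤ) : ℝ) • φ (fun k ↦ g (τ k.succ)) := by
  have hfaces (j : Fin (n + 2)) := neg_one_pow_smul_sum_sign_smul_comp_succAbove (R := ℝ)
    (fun u ↦ φ (fun k ↦ g (u k))) j
  simp only [altCochain, hdelta, Finset.smul_sum, smul_comm (((sign _ : ℤ) : ℝ)) ((-1 : ℝ) ^ _)]
  rw [Finset.sum_comm]
  simp only [← Finset.smul_sum, hfaces]
  rw [Finset.sum_const, Finset.card_univ, Fintype.card_fin, ← Nat.cast_smul_eq_nsmul ℝ, smul_smul,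
    Nat.factorial_succ (n + 1)]
  congr 1
  push_cast
  field_simp
  ring

end Cochains

lemma nnnorm_altCochain_le {G V : Type*} [NormedAddCommGroup V] [NormedSpace ℝ V] {m : ℕ}
    (ψ : (Fin (m + 1) → G) → V) (g : Fin (m + 1) → G) :
    (‖altCochain m ψ g‖₊ : ℝ≥0∞) ≤ ⨆ h : Fin (m + 1) → G, (‖ψ h‖₊ : ℝ≥0∞) := by
  set M := ⨆ h : Fin (m + 1) → G, (‖ψ h‖₊ : ℝ≥0∞)
  have hterm (σ : Perm (Fin (m + 1))) :
      ‖((sign σ : ℤ) : ℝ) • ψ (fun i ↦ g (σ i))‖ₑ ≤ M := by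
    rw [Int.cast_smul_eq_zsmul, ← Units.smul_def, enorm_eq_nnnorm, nnnorm_units_zsmul]
    exact le_iSup (fun h ↦ (‖ψ h‖₊ : ℝ≥0∞)) (fun i ↦ g (σ i))
  have hcard : ((m + 1).factorial : ℝ≥0∞) ≠ 0 := by positivity
  calc ‖altCochain m ψ g‖ₑ
      ≤ ((m + 1).factorial : ℝ≥0∞)⁻¹ * ∑ σ : Perm (Fin (m + 1)),
          ‖((sign σ : ℤ) : ℝ) • ψ (fun i ↦ g (σ i))‖ₑ := by
        rw [altCochain, enorm_smul, enorm_inv (by positivity), Real.enorm_natCast]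
        gcongr
        exact enorm_sum_le _ _
    _ ≤ ((m + 1).factorial : ℝ≥0∞)⁻¹ * ∑ _σ : Perm (Fin (m + 1)), M := by
        gcongr with σ; exact hterm σ
    _ = M := by
        rw [Finset.sum_const, Finset.card_univ, Fintype.card_perm, Fintype.card_fin, nsmul_eq_mul,
          ← mul_assoc, ENNReal.inv_mul_cancel hcard (ENNReal.natCast_ne_top _), one_mul]

/-- `δⁿ ∘ altⁿ = alt^{n+1} ∘ δⁿ`; consequently the alternation of a quasi-cocycle is a
quasi-cocycle with no larger defect. -/
theorem hdelta_altCochain_comm {G : Type*} {V : Type*} [NormedAddCommGroup V]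
    [NormedSpace ℝ V] (n : ℕ) (φ : (Fin (n + 1) → G) → V) :
    hdelta n (altCochain n φ) = altCochain (n + 1) (hdelta n φ) ∧
    (⨆ g : Fin (n + 2) → G, (‖hdelta n (altCochain n φ) g‖₊ : ℝ≥0∞)) ≤
      ⨆ g : Fin (n + 2) → G, (‖hdelta n φ g‖₊ : ℝ≥0∞) := by
  have hcomm : hdelta n (altCochain n φ) = altCochain (n + 1) (hdelta n φ) := by
    ext g
    rw [hdelta_altCochain_apply, altCochain_hdelta_apply]
  refine ⟨hcomm, iSup_le fun g ↦ ?_⟩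
  rw [hcomm]
  exact nnnorm_altCochain_le (hdelta n φ) g
end

section
/- Let X be a δ-hyperbolic geodesic metric space and let 𝒜 be a family of σ-quasi-convex subsets of X that is geometrically separated. Then 𝒜 is K-linearly geometrically separated for some K ≥ 0: there exists K such that for any distinct A, B ∈ 𝒜 and every D ≥ 1, diam(N_D(A) ∩ B) ≤ K·D, where N_D(A) is the closed D-neighborhood of A. -/
open scoped ENNReal

/-- `f` is a (unit-speed) geodesic from `x` to `y`: an isometric embedding of
`[0, dist x y]` sending the endpoints to `x` and `y`. -/
def IsGeodesicFrom {X : Type*} [MetricSpace X] (f : ℝ → X) (x y : X) : Prop :=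
  f 0 = x ∧ f (dist x y) = y ∧
    ∀ s ∈ Set.Icc (0 : ℝ) (dist x y), ∀ t ∈ Set.Icc (0 : ℝ) (dist x y),
      dist (f s) (f t) = |s - t|

/-!
A geodesic `[x, y]` between two points of `B ∩ N_D(A)` stays `σ`-close to `B`, and, once we are
about `D + 2δ` away from its endpoints, also `(σ + 2δ)`-close to `A`: pass from `[x, y]` to
`[a, y]` and then to `[a, b]` through two thin triangles, where `a, b ∈ A` are near `x, y`, and
use quasi-convexity of `A`. The two points of `[x, y]` at distance `≈ D + 2δ` from the ends are
therefore near `N_{2σ+2δ+1}(A) ∩ B`, whose diameter is bounded by a constant `K₀` by geometric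
separation. Hence `dist x y ≤ K₀ + O(σ + δ) + 2D`, which is linear in `D` for `D ≥ 1`.
-/

section

open Metric Set

def IsGeodesicSpace (X : Type*) [MetricSpace X] : Prop :=
  ∀ x y : X, ∃ f : ℝ → X, IsGeodesicFrom f x y

def GeodesicTrianglesThin (X : Type*) [MetricSpace X] (δ : ℝ) : Prop :=
  ∀ (x y z : X) (f g h : ℝ → X), IsGeodesicFrom f x y → IsGeodesicFrom g y z →
    IsGeodesicFrom h x z → ∀ t ∈ Icc (0 : ℝ) (dist x z),
      infDist (h t) (f '' Icc (0 : ℝ) (dist x y) ∪ g '' Icc (0 : ℝ) (dist y z)) ≤ δ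

def IsQuasiConvex {X : Type*} [MetricSpace X] (σ : ℝ) (A : Set X) : Prop :=
  ∀ a ∈ A, ∀ b ∈ A, ∀ f : ℝ → X, IsGeodesicFrom f a b →
    ∀ t ∈ Icc (0 : ℝ) (dist a b), infDist (f t) A ≤ σ

variable {X : Type*} [MetricSpace X]

namespace IsGeodesicFrom

variable {f : ℝ → X} {x y : X} {t : ℝ}

lemma dist_left (hf : IsGeodesicFrom f x y) (ht : t ∈ Icc 0 (dist x y)) : dist (f t) x = t := by
  rw [← hf.1, hf.2.2 t ht 0 ⟨le_rfl, dist_nonneg⟩, sub_zero, abs_of_nonneg ht.1]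

lemma dist_right (hf : IsGeodesicFrom f x y) (ht : t ∈ Icc 0 (dist x y)) :
    dist (f t) y = dist x y - t := by
  conv_lhs => rw [← hf.2.1]
  rw [hf.2.2 t ht _ ⟨dist_nonneg, le_rfl⟩, abs_sub_comm, abs_of_nonneg (sub_nonneg.2 ht.2)]

lemma isCompact_image (hf : IsGeodesicFrom f x y) : IsCompact (f '' Icc 0 (dist x y)) :=
  isCompact_Icc.image_of_continuousOn <|
    (LipschitzOnWith.mk_one fun s hs t ht => (hf.2.2 s hs t ht).le).continuousOn

end IsGeodesicFrom

namespace GeodesicTrianglesThin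

variable {δ : ℝ} {x y z : X} {f g h : ℝ → X} {t : ℝ}

lemma exists_dist_le (thin : GeodesicTrianglesThin X δ) (hf : IsGeodesicFrom f x y)
    (hg : IsGeodesicFrom g y z) (hh : IsGeodesicFrom h x z) (ht : t ∈ Icc 0 (dist x z)) :
    (∃ s ∈ Icc 0 (dist x y), dist (h t) (f s) ≤ δ) ∨
      ∃ s ∈ Icc 0 (dist y z), dist (h t) (g s) ≤ δ := by
  obtain ⟨w, hw, hdist⟩ := (hf.isCompact_image.union hg.isCompact_image).exists_infDist_eq_dist
    ⟨f 0, .inl (mem_image_of_mem f ⟨le_rfl, dist_nonneg⟩)⟩ (h t)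
  have hδ := hdist ▸ thin x y z f g h hf hg hh t ht
  rcases hw with ⟨s, hs, rfl⟩ | ⟨s, hs, rfl⟩
  exacts [.inl ⟨s, hs, hδ⟩, .inr ⟨s, hs, hδ⟩]

lemma exists_dist_le_right_of_lt (thin : GeodesicTrianglesThin X δ) (hf : IsGeodesicFrom f x y)
    (hg : IsGeodesicFrom g y z) (hh : IsGeodesicFrom h x z) (ht : t ∈ Icc 0 (dist x z))
    (hfar : dist x y + δ < t) : ∃ s ∈ Icc 0 (dist y z), dist (h t) (g s) ≤ δ := by
  refine (thin.exists_dist_le hf hg hh ht).resolve_left ?_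
  rintro ⟨s, hs, hδ⟩
  have := dist_triangle (h t) (f s) x
  rw [hh.dist_left ht, hf.dist_left hs] at this
  linarith [hs.2]

lemma exists_dist_le_left_of_lt (thin : GeodesicTrianglesThin X δ) (hf : IsGeodesicFrom f x y)
    (hg : IsGeodesicFrom g y z) (hh : IsGeodesicFrom h x z) (ht : t ∈ Icc 0 (dist x z))
    (hfar : dist y z + δ < dist x z - t) : ∃ s ∈ Icc 0 (dist x y), dist (h t) (f s) ≤ δ := by
  refine (thin.exists_dist_le hf hg hh ht).resolve_right ?_
  rintro ⟨s, hs, hδ⟩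
  have := dist_triangle (h t) (g s) z
  rw [hh.dist_right ht, hg.dist_right hs] at this
  linarith [hs.1]

end GeodesicTrianglesThin

variable {δ σ : ℝ} {A B : Set X}

lemma infDist_le_of_far_from_endpoints (geodesic : IsGeodesicSpace X)
    (thin : GeodesicTrianglesThin X δ) (hA : IsQuasiConvex σ A) {x y a b : X} {h : ℝ → X}
    {t : ℝ} (hh : IsGeodesicFrom h x y) (ht : t ∈ Icc 0 (dist x y)) (ha : a ∈ A) (hb : b ∈ A)
    (hxa : dist x a + δ < t) (hyb : dist y b + 2 * δ < dist x y - t) :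
    infDist (h t) A ≤ σ + 2 * δ := by
  obtain ⟨f₁, hf₁⟩ := geodesic x a
  obtain ⟨g₁, hg₁⟩ := geodesic a y
  obtain ⟨s, hs, hts⟩ := thin.exists_dist_le_right_of_lt hf₁ hg₁ hh ht hxa
  obtain ⟨f₂, hf₂⟩ := geodesic a b
  obtain ⟨g₂, hg₂⟩ := geodesic b y
  have hsfar : dist b y + δ < dist a y - s := by
    have := dist_triangle (h t) (g₁ s) y
    rw [hh.dist_right ht, hg₁.dist_right hs] at this
    linarith [dist_comm b y]
  obtain ⟨u, hu, hsu⟩ := thin.exists_dist_le_left_of_lt hf₂ hg₂ hg₁ hs hsfar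
  calc infDist (h t) A ≤ infDist (f₂ u) A + dist (h t) (f₂ u) := infDist_le_infDist_add_dist
    _ ≤ σ + (dist (h t) (g₁ s) + dist (g₁ s) (f₂ u)) :=
        add_le_add (hA a ha b hb f₂ hf₂ u hu) (dist_triangle _ _ _)
    _ ≤ σ + 2 * δ := by linarith

lemma exists_mem_cthickening_inter_dist_le {p : X} {r : ℝ} (hA : A.Nonempty) (hB : B.Nonempty)
    (hpA : infDist p A ≤ r) (hpB : infDist p B ≤ σ) :
    ∃ q ∈ cthickening (r + σ + 1) A ∩ B, dist p q ≤ σ + 1 := by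
  obtain ⟨q, hqB, hpq⟩ := (infDist_lt_iff hB).1 (hpB.trans_lt (lt_add_one σ))
  have hqA : infDist q A < r + σ + 1 := by
    linarith [infDist_le_infDist_add_dist (x := q) (y := p) (s := A), dist_comm p q]
  obtain ⟨a, ha, hqa⟩ := (infDist_lt_iff hA).1 hqA
  exact ⟨q, ⟨mem_cthickening_of_dist_le q a _ A ha hqa.le, hqB⟩, hpq.le⟩

lemma exists_mem_dist_lt_of_mem_cthickening {x : X} {D : ℝ} (hD : 0 ≤ D)
    (hx : x ∈ cthickening D A) : ∃ a ∈ A, dist x a < D + 1 :=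
  mem_thickening_iff.1 <| cthickening_subset_thickening' (by linarith) (lt_add_one D) A hx

lemma dist_le_of_mem_cthickening_inter (geodesic : IsGeodesicSpace X)
    (thin : GeodesicTrianglesThin X δ) (hδ : 0 ≤ δ) (hσ : 0 ≤ σ) (hA : IsQuasiConvex σ A)
    (hB : IsQuasiConvex σ B) {K D : ℝ} (hK : 0 ≤ K) (hD : 0 ≤ D)
    (hsep : ediam (cthickening (2 * σ + 2 * δ + 1) A ∩ B) ≤ ENNReal.ofReal K)
    {x y : X} (hx : x ∈ cthickening D A ∩ B) (hy : y ∈ cthickening D A ∩ B) :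
    dist x y ≤ K + 2 * σ + 4 * δ + 4 + 2 * D := by
  obtain ⟨a, ha, hxa⟩ := exists_mem_dist_lt_of_mem_cthickening hD hx.1
  obtain ⟨b, hb, hyb⟩ := exists_mem_dist_lt_of_mem_cthickening hD hy.1
  set t₁ := D + 1 + 2 * δ
  rcases le_or_gt (dist x y) (2 * t₁) with hshort | hlong
  · linarith
  obtain ⟨h, hh⟩ := geodesic x y
  have ht₁ : t₁ ∈ Icc 0 (dist x y) := ⟨by positivity, by linarith⟩
  have ht₂ : dist x y - t₁ ∈ Icc 0 (dist x y) := ⟨by linarith, by linarith⟩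
  have near (t : ℝ) (ht : t ∈ Icc 0 (dist x y)) (hleft : t₁ ≤ t) (hright : t₁ ≤ dist x y - t) :
      ∃ q ∈ cthickening (2 * σ + 2 * δ + 1) A ∩ B, dist (h t) q ≤ σ + 1 := by
    have hhA := infDist_le_of_far_from_endpoints geodesic thin hA hh ht ha hb
      (by linarith) (by linarith [dist_comm y b])
    have hhB := hB x hx.2 y hy.2 h hh t ht
    have := exists_mem_cthickening_inter_dist_le ⟨a, ha⟩ ⟨x, hx.2⟩ hhA hhB
    rwa [show σ + 2 * δ + σ + 1 = 2 * σ + 2 * δ + 1 by ring] at this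
  obtain ⟨q₁, hq₁, hdq₁⟩ := near t₁ ht₁ le_rfl (by linarith)
  obtain ⟨q₂, hq₂, hdq₂⟩ := near _ ht₂ (by linarith) (by linarith)
  have hq₁₂ : dist q₁ q₂ ≤ K :=
    (edist_le_ofReal hK).1 ((edist_le_ediam_of_mem hq₁ hq₂).trans hsep)
  have hmid : dist (h t₁) (h (dist x y - t₁)) = dist x y - 2 * t₁ := by
    rw [hh.2.2 _ ht₁ _ ht₂, abs_sub_comm, abs_of_nonneg (by linarith)]
    ring
  have := dist_triangle4 (h t₁) q₁ q₂ (h (dist x y - t₁))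
  rw [hmid, dist_comm q₂] at this
  linarith

end

/-- If `X` is a geodesic metric space with `δ`-thin triangles and `𝒜` is a geometrically
separated family of `σ`-quasi-convex subsets, then `𝒜` is `K`-linearly geometrically separated
for some `K ≥ 0`. -/
theorem linearly_geometrically_separated_of_geometrically_separated
    {X : Type*} [MetricSpace X] (δ σ : ℝ) (hδ : 0 ≤ δ) (hσ : 0 ≤ σ)
    (geodesic : ∀ x y : X, ∃ f : ℝ → X, IsGeodesicFrom f x y)
    (thin : ∀ (x y z : X) (f g h : ℝ → X), IsGeodesicFrom f x y → IsGeodesicFrom g y z →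
      IsGeodesicFrom h x z → ∀ t ∈ Set.Icc (0 : ℝ) (dist x z),
        Metric.infDist (h t)
          (f '' Set.Icc (0 : ℝ) (dist x y) ∪ g '' Set.Icc (0 : ℝ) (dist y z)) ≤ δ)
    (𝒜 : Set (Set X))
    (hqc : ∀ A ∈ 𝒜, ∀ a ∈ A, ∀ b ∈ A, ∀ f : ℝ → X, IsGeodesicFrom f a b →
      ∀ t ∈ Set.Icc (0 : ℝ) (dist a b), Metric.infDist (f t) A ≤ σ)
    (hsep : ∀ D : ℝ, 0 ≤ D → ∃ K : ℝ, ∀ A ∈ 𝒜, ∀ B ∈ 𝒜, A ≠ B →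
      EMetric.diam (Metric.cthickening D A ∩ B) ≤ ENNReal.ofReal K) :
    ∃ K : ℝ, 0 ≤ K ∧ ∀ A ∈ 𝒜, ∀ B ∈ 𝒜, A ≠ B → ∀ D : ℝ, 1 ≤ D →
      EMetric.diam (Metric.cthickening D A ∩ B) ≤ ENNReal.ofReal (K * D) := by
  obtain ⟨K₀, hK₀⟩ := hsep (2 * σ + 2 * δ + 1) (by positivity)
  set C := max K₀ 0 + 2 * σ + 4 * δ + 4
  have hC : 0 ≤ C := by positivity
  refine ⟨C + 2, by positivity, fun A hA B hB hAB D hD => Metric.ediam_le fun x hx y hy => ?_⟩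
  have hsepA : Metric.ediam (Metric.cthickening (2 * σ + 2 * δ + 1) A ∩ B) ≤
      ENNReal.ofReal (max K₀ 0) :=
    (hK₀ A hA B hB hAB).trans (ENNReal.ofReal_le_ofReal (le_max_left _ _))
  have hxy := dist_le_of_mem_cthickening_inter geodesic thin hδ hσ (hqc A hA) (hqc B hB)
    (le_max_right _ _) (by linarith) hsepA hx hy
  rw [edist_dist]
  refine ENNReal.ofReal_le_ofReal ?_
  linarith [le_mul_of_one_le_right hC hD]
end
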